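/- arXiv:1909.00443 — 2 statements merged into one kernel-verified Lean document; each statement's English description precedes it below -/
import Mathlib

section
/- Every maximal ideal of 𝒵 is a prime ideal of 𝒵. -/
open Polynomial

/-- `𝒵_n = K[t][Σ_n]`, the group algebra of the symmetric group on `n` letters
over the polynomial ring `K[t]`. -/
abbrev Zn (K : Type) [Field K] (n : ℕ) : Type :=
  MonoidAlgebra (Polynomial K) (Equiv.Perm (Fin n))

/-- `KΣ_n`, the group algebra of the symmetric group over `K`. -/
abbrev GA (K : Type) [Field K] (n : ℕ) : Type :=
  MonoidAlgebra K (Equiv.Perm (Fin n))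

/-- The basis element `[σ]` of `𝒵_n`. -/
noncomputable def zbasis {K : Type} [Field K] {n : ℕ} (σ : Equiv.Perm (Fin n)) : Zn K n :=
  MonoidAlgebra.single σ 1

/-- For `σ ∈ Σ_{n+1}`, the permutation `τ ∈ Σ_n` with `τ (σ⁻¹ n) = σ n` and
`τ k = σ k` for all other `k`; if `σ` fixes the last point this is the
restriction of `σ`. -/
def reduceLast {n : ℕ} (σ : Equiv.Perm (Fin (n + 1))) : Equiv.Perm (Fin n) :=
  Equiv.removeNone (finSuccEquivLast.permCongr σ)

/-- The contraction `∂ : 𝒵_{n+1} → 𝒵_n`: the `K[t]`-linear map with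
`∂[σ] = t·[σ']` if `σ` fixes the last point (`σ'` the restriction) and
`∂[σ] = [reduceLast σ]` otherwise. -/
noncomputable def contractZ {K : Type} [Field K] {n : ℕ} (a : Zn K (n + 1)) : Zn K n :=
  Finsupp.sum a.coeff fun σ f =>
    MonoidAlgebra.single (reduceLast σ)
      ((if σ (Fin.last n) = Fin.last n then (X : Polynomial K) else 1) * f)

/-- `σ ⊕ τ ∈ Σ_{p+q}`: acts as `σ` on the first `p` letters and as the
shift of `τ` on the last `q` letters. -/
def permShift {p q : ℕ} (σ : Equiv.Perm (Fin p)) (τ : Equiv.Perm (Fin q)) :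
    Equiv.Perm (Fin (p + q)) :=
  finSumFinEquiv.permCongr (Equiv.sumCongr σ τ)

/-- The tensor product `⊗ : 𝒵_p × 𝒵_q → 𝒵_{p+q}`, the `K[t]`-bilinear map with
`[σ] ⊗ [τ] = [σ ⊕ τ]`. -/
noncomputable def ztensor {K : Type} [Field K] {p q : ℕ} (a : Zn K p) (b : Zn K q) :
    Zn K (p + q) :=
  Finsupp.sum a.coeff fun σ f => Finsupp.sum b.coeff fun τ g =>
    MonoidAlgebra.single (permShift σ τ) (f * g)

/-- An ideal of the wheeled PROP `𝒵`: a family `I_n ⊆ 𝒵_n` such that each `I_n` is a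
two-sided ideal of the ring `K[t][Σ_n]`, closed under tensoring (on either side) with
arbitrary elements, and closed under contraction. -/
structure ZIdeal (K : Type) [Field K] where
  carrier : ∀ n : ℕ, Set (Zn K n)
  zero_mem : ∀ n : ℕ, (0 : Zn K n) ∈ carrier n
  add_mem : ∀ (n : ℕ) (a b : Zn K n), a ∈ carrier n → b ∈ carrier n → a + b ∈ carrier n
  neg_mem : ∀ (n : ℕ) (a : Zn K n), a ∈ carrier n → -a ∈ carrier n
  mul_mem_left : ∀ (n : ℕ) (r a : Zn K n), a ∈ carrier n → r * a ∈ carrier n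
  mul_mem_right : ∀ (n : ℕ) (r a : Zn K n), a ∈ carrier n → a * r ∈ carrier n
  tensor_mem_left : ∀ (p q : ℕ) (a : Zn K p) (b : Zn K q),
    a ∈ carrier p → ztensor a b ∈ carrier (p + q)
  tensor_mem_right : ∀ (p q : ℕ) (a : Zn K p) (b : Zn K q),
    a ∈ carrier p → ztensor b a ∈ carrier (q + p)
  contract_mem : ∀ (n : ℕ) (a : Zn K (n + 1)), a ∈ carrier (n + 1) → contractZ a ∈ carrier n

/-- A nonzero ideal of `𝒵`. -/
def ZIdeal.Nonzero {K : Type} [Field K] (I : ZIdeal K) : Prop :=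
  ∃ (d : ℕ) (a : Zn K d), a ∈ I.carrier d ∧ a ≠ 0

/-- A standard Young tableau of shape `μ` with entries in `Fin n`:
a bijection from the cells of `μ` to `Fin n` (thought of as the entries `1,…,n`)
that increases along rows and columns.  (Coordinates of cells are 0-indexed,
in matrix convention: `(i, j)` is row `i`, column `j`.) -/
structure SYT (μ : YoungDiagram) (n : ℕ) where
  toEquiv : {c : ℕ × ℕ // c ∈ μ} ≃ Fin n
  row_lt : ∀ c d : {c : ℕ × ℕ // c ∈ μ},
    c.1.1 = d.1.1 → c.1.2 < d.1.2 → toEquiv c < toEquiv d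
  col_lt : ∀ c d : {c : ℕ × ℕ // c ∈ μ},
    c.1.2 = d.1.2 → c.1.1 < d.1.1 → toEquiv c < toEquiv d

/-- `σ` belongs to the row stabilizer `R(T)` of the tableau `T`. -/
def isRowStab {μ : YoungDiagram} {n : ℕ} (T : SYT μ n) (σ : Equiv.Perm (Fin n)) : Prop :=
  ∀ k : Fin n, (T.toEquiv.symm (σ k)).1.1 = (T.toEquiv.symm k).1.1

/-- `σ` belongs to the column stabilizer `C(T)` of the tableau `T`. -/
def isColStab {μ : YoungDiagram} {n : ℕ} (T : SYT μ n) (σ : Equiv.Perm (Fin n)) : Prop :=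
  ∀ k : Fin n, (T.toEquiv.symm (σ k)).1.2 = (T.toEquiv.symm k).1.2

open Classical in
/-- The Young symmetrizer `y_T = Σ_{σ ∈ R(T), π ∈ C(T)} sgn(π)·[π σ]`, with
coefficients in a commutative ring `R`. -/
noncomputable def ySym (R : Type) [CommRing R] {μ : YoungDiagram} {n : ℕ} (T : SYT μ n) :
    MonoidAlgebra R (Equiv.Perm (Fin n)) :=
  ∑ σ : Equiv.Perm (Fin n), ∑ π : Equiv.Perm (Fin n),
    if isRowStab T σ ∧ isColStab T π then
      MonoidAlgebra.single (π * σ) (((Equiv.Perm.sign π : ℤ) : R))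
    else 0

/-- The two-sided span `A·S·A` of a subset `S` of a `K`-algebra `A`,
as a `K`-subspace. -/
noncomputable def twoSidedSpan {K : Type} [Field K] {A : Type} [Ring A] [Algebra K A]
    (S : Set A) : Submodule K A :=
  Submodule.span K {x | ∃ a b : A, ∃ s ∈ S, x = a * s * b}

/-- The simple two-sided ideal `J_λ = KΣ_n · y_T · KΣ_n ⊆ KΣ_n` attached to a
partition (Young diagram) `μ`; it does not depend on the choice of a standard
Young tableau `T` of shape `μ`, so we take the supremum over all of them. -/
noncomputable def Jideal (K : Type) [Field K] (n : ℕ) (μ : YoungDiagram) :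
    Submodule K (GA K n) :=
  ⨆ T : SYT μ n, twoSidedSpan {ySym K T}

/-- The embedding `KΣ_n → K[t][Σ_n]` (coefficientwise `K → K[t]`). -/
noncomputable def embZ (K : Type) [Field K] (n : ℕ) : GA K n →ₗ[K] Zn K n :=
  (MonoidAlgebra.coeffLinearEquiv K).symm.toLinearMap ∘ₗ
    Finsupp.mapRange.linearMap (Algebra.linearMap K (Polynomial K)) ∘ₗ
    (MonoidAlgebra.coeffLinearEquiv K).toLinearMap

/-- `J_λ`, regarded inside `𝒵_n = K[t][Σ_n]` (as a `K`-subspace). -/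
noncomputable def JZ (K : Type) [Field K] (n : ℕ) (μ : YoungDiagram) :
    Submodule K (Zn K n) :=
  Submodule.map (embZ K n) (Jideal K n μ)

/-- `L·J_λ ⊆ 𝒵_n`: the `K`-span of products `f • x` with `f ∈ L ⊆ K[t]`, `x ∈ J_λ`. -/
noncomputable def LJ (K : Type) [Field K] (n : ℕ) (L : Ideal (Polynomial K))
    (μ : YoungDiagram) : Submodule K (Zn K n) :=
  Submodule.span K {x | ∃ f ∈ L, ∃ y ∈ JZ K n μ, x = f • y}

/-- The partitions of `n`, as Young diagrams with `n` cells. -/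
def Par (n : ℕ) : Type := {μ : YoungDiagram // μ.card = n}

/-- `I_n` decomposes as the direct sum `⊕_{λ ⊢ n} L_λ·J_λ`. -/
def IsDecomp (K : Type) [Field K] (n : ℕ) (S : Set (Zn K n))
    (L : Par n → Ideal (Polynomial K)) : Prop :=
  S = ↑(⨆ μ : Par n, LJ K n (L μ) μ.1) ∧ iSupIndep fun μ : Par n => LJ K n (L μ) μ.1

/-- For a monic `f ∈ K[t]` and a finite set `C` of boxes, the polynomial
`g_λ = f · ∏_{(i,j) ∈ C, (i,j) ∉ λ} (t + j − i)`. -/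
noncomputable def gOf (K : Type) [Field K] (f : Polynomial K) (C : Finset (ℕ × ℕ))
    (μ : YoungDiagram) : Polynomial K :=
  f * ∏ c ∈ C.filter (fun c => c ∉ μ), ((X : Polynomial K) + (c.2 : Polynomial K) - (c.1 : Polynomial K))

/-- The `n`-th piece of the ideal `I(f, C)` of `𝒵`:
`I(f,C)_n = ⊕_{λ ⊢ n} (g_λ)·J_λ`. -/
noncomputable def IfcCarrier (K : Type) [Field K] (f : Polynomial K) (C : Finset (ℕ × ℕ))
    (n : ℕ) : Set (Zn K n) :=
  ↑(⨆ μ : Par n, LJ K n (Ideal.span {gOf K f C μ.1}) μ.1)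

/-- A prime ideal of the wheeled PROP `𝒵`. -/
def ZIdeal.IsPrime {K : Type} [Field K] (P : ZIdeal K) : Prop :=
  (∃ (n : ℕ) (a : Zn K n), a ∉ P.carrier n) ∧
  ∀ (p q : ℕ) (a : Zn K p) (b : Zn K q),
    ztensor a b ∈ P.carrier (p + q) → a ∈ P.carrier p ∨ b ∈ P.carrier q

/-- A maximal ideal of the wheeled PROP `𝒵`. -/
def ZIdeal.IsMaximal {K : Type} [Field K] (M : ZIdeal K) : Prop :=
  (∃ (n : ℕ) (a : Zn K n), a ∉ M.carrier n) ∧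
  ∀ J : ZIdeal K, (∀ n : ℕ, M.carrier n ⊆ J.carrier n) →
    (∀ n : ℕ, J.carrier n = M.carrier n) ∨ (∀ n : ℕ, J.carrier n = Set.univ)

namespace ZAux

open Equiv MonoidAlgebra

/-- `permCongr` as a monoid hom. -/
def pCH {α β : Type} (e : α ≃ β) : Equiv.Perm α →* Equiv.Perm β where
  toFun := e.permCongr
  map_one' := by ext x; simp
  map_mul' := fun f g => by ext x; simp [Equiv.Perm.mul_apply]

@[simp] lemma pCH_apply {α β : Type} (e : α ≃ β) (p : Equiv.Perm α) :
    pCH e p = e.permCongr p := rfl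

def shL (p q : ℕ) : Equiv.Perm (Fin p) →* Equiv.Perm (Fin (p + q)) :=
  (pCH finSumFinEquiv).comp ((Equiv.Perm.sumCongrHom (Fin p) (Fin q)).comp (MonoidHom.inl _ _))

def shR (p q : ℕ) : Equiv.Perm (Fin q) →* Equiv.Perm (Fin (p + q)) :=
  (pCH finSumFinEquiv).comp ((Equiv.Perm.sumCongrHom (Fin p) (Fin q)).comp (MonoidHom.inr _ _))

lemma shL_apply {p q : ℕ} (σ : Equiv.Perm (Fin p)) : shL p q σ = permShift σ 1 := rfl
lemma shR_apply {p q : ℕ} (τ : Equiv.Perm (Fin q)) : shR p q τ = permShift 1 τ := rfl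

lemma shL_mul_shR {p q : ℕ} (σ : Equiv.Perm (Fin p)) (τ : Equiv.Perm (Fin q)) :
    shL p q σ * shR p q τ = permShift σ τ := by
  have h : ((σ, 1) : Equiv.Perm (Fin p) × Equiv.Perm (Fin q)) * (1, τ) = (σ, τ) := by
    simp [Prod.ext_iff]
  show (pCH finSumFinEquiv) ((Equiv.Perm.sumCongrHom _ _) (σ, 1)) *
      (pCH finSumFinEquiv) ((Equiv.Perm.sumCongrHom _ _) (1, τ)) = _
  rw [← map_mul, ← map_mul, h]
  rfl

lemma shR_mul_shL {p q : ℕ} (σ : Equiv.Perm (Fin p)) (τ : Equiv.Perm (Fin q)) :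
    shR p q τ * shL p q σ = permShift σ τ := by
  have h : ((1, τ) : Equiv.Perm (Fin p) × Equiv.Perm (Fin q)) * (σ, 1) = (σ, τ) := by
    simp [Prod.ext_iff]
  show (pCH finSumFinEquiv) ((Equiv.Perm.sumCongrHom _ _) (1, τ)) *
      (pCH finSumFinEquiv) ((Equiv.Perm.sumCongrHom _ _) (σ, 1)) = _
  rw [← map_mul, ← map_mul, h]
  rfl

variable {K : Type} [Field K]

noncomputable def iota1 (K : Type) [Field K] (p q : ℕ) : Zn K p →+* Zn K (p + q) :=
  MonoidAlgebra.mapDomainRingHom (Polynomial K) (shL p q)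

noncomputable def iota2 (K : Type) [Field K] (p q : ℕ) : Zn K q →+* Zn K (p + q) :=
  MonoidAlgebra.mapDomainRingHom (Polynomial K) (shR p q)

lemma iota1_apply {p q : ℕ} (a : Zn K p) : iota1 K p q a = MonoidAlgebra.ofCoeff (Finsupp.mapDomain (shL p q) a.coeff) := rfl
lemma iota2_apply {p q : ℕ} (b : Zn K q) : iota2 K p q b = MonoidAlgebra.ofCoeff (Finsupp.mapDomain (shR p q) b.coeff) := rfl

lemma ztensor_eq {p q : ℕ} (a : Zn K p) (b : Zn K q) :
    ztensor a b = iota1 K p q a * iota2 K p q b := by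
  rw [ztensor, MonoidAlgebra.mul_def, iota1_apply, iota2_apply, MonoidAlgebra.coeff_ofCoeff,
    MonoidAlgebra.coeff_ofCoeff]
  rw [Finsupp.sum_mapDomain_index (by intro b'; simp)
    (by intro b' m₁ m₂; simp [add_mul, Finsupp.single_add, Finsupp.sum_add])]
  refine Finsupp.sum_congr fun σ _ => ?_
  rw [Finsupp.sum_mapDomain_index (by intro b'; simp)
    (by intro b' m₁ m₂; simp [mul_add, Finsupp.single_add])]
  refine Finsupp.sum_congr fun τ _ => ?_
  rw [shL_mul_shR]

lemma ztensor_eq' {p q : ℕ} (a : Zn K p) (b : Zn K q) :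
    ztensor a b = iota2 K p q b * iota1 K p q a := by
  rw [ztensor, MonoidAlgebra.mul_def, iota1_apply, iota2_apply, MonoidAlgebra.coeff_ofCoeff,
    MonoidAlgebra.coeff_ofCoeff]
  rw [Finsupp.sum_mapDomain_index (by intro b'; simp)
    (by intro b' m₁ m₂; simp [add_mul, Finsupp.single_add, Finsupp.sum_add])]
  rw [Finsupp.sum_comm]
  refine Finsupp.sum_congr fun σ _ => ?_
  rw [Finsupp.sum_mapDomain_index (by intro b'; simp)
    (by intro b' m₁ m₂; simp [mul_add, Finsupp.single_add])]
  refine Finsupp.sum_congr fun τ _ => ?_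
  rw [shR_mul_shL, mul_comm]

lemma iota_comm {p q : ℕ} (a : Zn K p) (b : Zn K q) :
    iota1 K p q a * iota2 K p q b = iota2 K p q b * iota1 K p q a := by
  rw [← ztensor_eq, ← ztensor_eq']

end ZAux

namespace ZAux

open Equiv MonoidAlgebra

lemma permCongr_permCongr {α β γ : Type} (e : α ≃ β) (f : β ≃ γ) (x : Equiv.Perm α) :
    f.permCongr (e.permCongr x) = (e.trans f).permCongr x := by
  ext y; simp

lemma sumComm_permCongr {α β : Type} (σ : Equiv.Perm α) (τ : Equiv.Perm β) :
    (Equiv.sumComm α β).permCongr (Equiv.sumCongr σ τ) = Equiv.sumCongr τ σ := by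
  ext x; cases x <;> simp

lemma sumCongr_permCongr_left {α β γ : Type} (e : α ≃ β) (x : Equiv.Perm α) (ρ : Equiv.Perm γ) :
    Equiv.sumCongr (e.permCongr x) ρ =
      (Equiv.sumCongr e (Equiv.refl γ)).permCongr (Equiv.sumCongr x ρ) := by
  ext z; cases z <;> simp

lemma sumCongr_permCongr_right {α β γ : Type} (e : α ≃ β) (y : Equiv.Perm α) (σ : Equiv.Perm γ) :
    Equiv.sumCongr σ (e.permCongr y) =
      (Equiv.sumCongr (Equiv.refl γ) e).permCongr (Equiv.sumCongr σ y) := by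
  ext z; cases z <;> simp

lemma sumAssoc_permCongr {α β γ : Type} (σ : Equiv.Perm α) (τ : Equiv.Perm β) (ρ : Equiv.Perm γ) :
    (Equiv.sumAssoc α β γ).permCongr (Equiv.sumCongr (Equiv.sumCongr σ τ) ρ) =
      Equiv.sumCongr σ (Equiv.sumCongr τ ρ) := by
  apply Equiv.ext; rintro (a | (b | c)) <;> simp

/-- the commutation equivalence `Fin (p+q) ≃ Fin (q+p)` -/
def cE (p q : ℕ) : Fin (p + q) ≃ Fin (q + p) :=
  finSumFinEquiv.symm.trans ((Equiv.sumComm (Fin p) (Fin q)).trans finSumFinEquiv)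

lemma master_comm {p q : ℕ} (σ : Equiv.Perm (Fin p)) (τ : Equiv.Perm (Fin q)) :
    (cE p q).permCongr (permShift σ τ) = permShift τ σ := by
  rw [permShift, permCongr_permCongr]
  have h : finSumFinEquiv.trans (cE p q) =
      (Equiv.sumComm (Fin p) (Fin q)).trans finSumFinEquiv := by
    rw [cE, ← Equiv.trans_assoc, Equiv.self_trans_symm, Equiv.refl_trans]
  rw [h, ← permCongr_permCongr, sumComm_permCongr, permShift]

/-- the associativity equivalence `Fin ((q+n)+r) ≃ Fin (q+(n+r))` -/
def aE (q n r : ℕ) : Fin ((q + n) + r) ≃ Fin (q + (n + r)) :=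
  finSumFinEquiv.symm.trans
    ((Equiv.sumCongr finSumFinEquiv.symm (Equiv.refl (Fin r))).trans
      ((Equiv.sumAssoc (Fin q) (Fin n) (Fin r)).trans
        ((Equiv.sumCongr (Equiv.refl (Fin q)) finSumFinEquiv).trans finSumFinEquiv)))

lemma master_assoc {q n r : ℕ} (σ : Equiv.Perm (Fin q)) (τ : Equiv.Perm (Fin n))
    (ρ : Equiv.Perm (Fin r)) :
    (aE q n r).permCongr (permShift (permShift σ τ) ρ) = permShift σ (permShift τ ρ) := by
  rw [permShift, permShift, sumCongr_permCongr_left, permCongr_permCongr, permCongr_permCongr]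
  have h : (Equiv.sumCongr finSumFinEquiv (Equiv.refl (Fin r))).trans
        (finSumFinEquiv.trans (aE q n r)) =
      (Equiv.sumAssoc (Fin q) (Fin n) (Fin r)).trans
        ((Equiv.sumCongr (Equiv.refl (Fin q)) finSumFinEquiv).trans finSumFinEquiv) := by
    ext z; simp [aE]
  rw [h, ← permCongr_permCongr, ← permCongr_permCongr, sumAssoc_permCongr,
    ← sumCongr_permCongr_right]
  rfl

/-- the middle-swap equivalence `Fin (p+(n+r)) ≃ Fin (p+(r+n))` -/
def mE (p n r : ℕ) : Fin (p + (n + r)) ≃ Fin (p + (r + n)) :=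
  finSumFinEquiv.symm.trans
    ((Equiv.sumCongr (Equiv.refl (Fin p)) (cE n r)).trans finSumFinEquiv)

lemma master_mid {p n r : ℕ} (σ : Equiv.Perm (Fin p)) (y : Equiv.Perm (Fin (n + r))) :
    (mE p n r).permCongr (permShift σ y) = permShift σ ((cE n r).permCongr y) := by
  rw [permShift, permCongr_permCongr]
  have h : finSumFinEquiv.trans (mE p n r) =
      (Equiv.sumCongr (Equiv.refl (Fin p)) (cE n r)).trans finSumFinEquiv := by
    rw [mE, ← Equiv.trans_assoc, Equiv.self_trans_symm, Equiv.refl_trans]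
  rw [h, ← permCongr_permCongr, ← sumCongr_permCongr_right, permShift]

lemma permShift_one {p q : ℕ} : permShift (1 : Equiv.Perm (Fin p)) (1 : Equiv.Perm (Fin q)) = 1 := by
  ext k
  simp [permShift]

end ZAux

namespace ZAux

open Equiv MonoidAlgebra

variable {K : Type} [Field K]

lemma permCongr_eq_conj {α : Type} (s ρ : Equiv.Perm α) : s.permCongr ρ = s * ρ * s⁻¹ := by
  ext x; simp [Equiv.Perm.mul_apply]

/-- relabeling map on `Zn` induced by an equivalence of index sets. -/
noncomputable def psi (K : Type) [Field K] {m m' : ℕ} (s : Fin m ≃ Fin m') :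
    Zn K m →+* Zn K m' :=
  MonoidAlgebra.mapDomainRingHom (Polynomial K) (pCH s)

lemma psi_apply {m m' : ℕ} (s : Fin m ≃ Fin m') (x : Zn K m) :
    psi K s x = MonoidAlgebra.mapDomain (pCH s) x := rfl

lemma psi_eq_conj {m : ℕ} (s : Fin m ≃ Fin m) (x : Zn K m) :
    psi K s x = zbasis (K := K) s * x * zbasis s⁻¹ := by
  induction x using MonoidAlgebra.induction_linear with
  | zero => simp [map_zero]
  | add f g hf hg => rw [map_add, hf, hg, mul_add, add_mul]
  | single σ f =>
      rw [psi_apply, MonoidAlgebra.mapDomain_single, zbasis, zbasis,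
        MonoidAlgebra.single_mul_single, MonoidAlgebra.single_mul_single,
        pCH_apply, permCongr_eq_conj]
      simp

lemma psi_mem (M : ZIdeal K) {m m' : ℕ} (h : m = m') (s : Fin m ≃ Fin m') {x : Zn K m}
    (hx : x ∈ M.carrier m) : psi K s x ∈ M.carrier m' := by
  subst h
  rw [psi_eq_conj]
  exact M.mul_mem_right _ _ _ (M.mul_mem_left _ _ _ hx)

lemma mapDomainRingHom_comp {G H I : Type} [Monoid G] [Monoid H] [Monoid I]
    (f : H →* I) (g : G →* H) (x : MonoidAlgebra (Polynomial K) G) :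
    MonoidAlgebra.mapDomainRingHom (Polynomial K) (f.comp g) x =
      MonoidAlgebra.mapDomainRingHom (Polynomial K) f
        (MonoidAlgebra.mapDomainRingHom (Polynomial K) g x) := by
  show MonoidAlgebra.ofCoeff (Finsupp.mapDomain _ x.coeff) =
    MonoidAlgebra.ofCoeff (Finsupp.mapDomain _ (MonoidAlgebra.ofCoeff (Finsupp.mapDomain _ x.coeff)).coeff)
  rw [MonoidAlgebra.coeff_ofCoeff, ← Finsupp.mapDomain_comp]
  rfl

lemma psi_ringHom {m m' k : ℕ} (s : Fin m ≃ Fin m') (g : Equiv.Perm (Fin k) →* Equiv.Perm (Fin m))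
    (g' : Equiv.Perm (Fin k) →* Equiv.Perm (Fin m'))
    (hg : ∀ σ, s.permCongr (g σ) = g' σ) (x : Zn K k) :
    psi K s (MonoidAlgebra.mapDomainRingHom (Polynomial K) g x) =
      MonoidAlgebra.mapDomainRingHom (Polynomial K) g' x := by
  show MonoidAlgebra.ofCoeff (Finsupp.mapDomain _ (MonoidAlgebra.ofCoeff (Finsupp.mapDomain _ x.coeff)).coeff) =
    MonoidAlgebra.ofCoeff (Finsupp.mapDomain _ x.coeff)
  rw [MonoidAlgebra.coeff_ofCoeff, ← Finsupp.mapDomain_comp]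
  exact congrArg MonoidAlgebra.ofCoeff (Finsupp.mapDomain_congr fun σ _ => hg σ)

lemma psi_cE {p q : ℕ} (u : Zn K p) (v : Zn K q) :
    psi K (cE p q) (ztensor u v) = ztensor v u := by
  rw [ztensor_eq, map_mul, ztensor_eq', iota1, iota2, iota1, iota2,
    psi_ringHom (cE p q) (shL p q) (shR q p)
      (fun σ => by rw [shL_apply, shR_apply]; exact master_comm σ 1),
    psi_ringHom (cE p q) (shR p q) (shL q p)
      (fun τ => by rw [shR_apply, shL_apply]; exact master_comm 1 τ)]

lemma psi_aE {q n r : ℕ} (u : Zn K q) (v : Zn K n) (w : Zn K r) :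
    psi K (aE q n r) (ztensor (ztensor u v) w) = ztensor u (ztensor v w) := by
  have h1 : psi K (aE q n r) (iota1 K (q+n) r (iota1 K q n u)) = iota1 K q (n+r) u := by
    simp only [iota1]
    rw [← mapDomainRingHom_comp]
    exact psi_ringHom _ _ _ (fun σ => by
      show (aE q n r).permCongr (permShift (permShift σ 1) 1) = permShift σ 1
      rw [master_assoc, permShift_one]) u
  have h2 : psi K (aE q n r) (iota1 K (q+n) r (iota2 K q n v)) =
      iota2 K q (n+r) (iota1 K n r v) := by
    simp only [iota1, iota2]
    rw [← mapDomainRingHom_comp, ← mapDomainRingHom_comp]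
    exact psi_ringHom _ _ _ (fun τ => by
      show (aE q n r).permCongr (permShift (permShift 1 τ) 1) = permShift 1 (permShift τ 1)
      rw [master_assoc]) v
  have h3 : psi K (aE q n r) (iota2 K (q+n) r w) = iota2 K q (n+r) (iota2 K n r w) := by
    simp only [iota1, iota2]
    rw [← mapDomainRingHom_comp]
    exact psi_ringHom _ _ _ (fun ρ => by
      show (aE q n r).permCongr (permShift 1 ρ) = permShift 1 (permShift 1 ρ)
      rw [← permShift_one (p := q) (q := n), master_assoc]) w
  calc psi K (aE q n r) (ztensor (ztensor u v) w)
      = psi K (aE q n r) (iota1 K (q+n) r (iota1 K q n u)) *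
          psi K (aE q n r) (iota1 K (q+n) r (iota2 K q n v)) *
          psi K (aE q n r) (iota2 K (q+n) r w) := by
        rw [ztensor_eq (ztensor u v) w, ztensor_eq u v, map_mul, map_mul, map_mul]
    _ = iota1 K q (n+r) u * (iota2 K q (n+r) (iota1 K n r v) *
          iota2 K q (n+r) (iota2 K n r w)) := by rw [h1, h2, h3, mul_assoc]
    _ = ztensor u (ztensor v w) := by
        rw [ztensor_eq u (ztensor v w), ztensor_eq v w, map_mul]

lemma psi_mE {p n r : ℕ} (u : Zn K p) (z : Zn K (n + r)) :
    psi K (mE p n r) (ztensor u z) = ztensor u (psi K (cE n r) z) := by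
  have h1 : psi K (mE p n r) (iota1 K p (n+r) u) = iota1 K p (r+n) u := by
    simp only [iota1]
    exact psi_ringHom _ _ _ (fun σ => by
      show (mE p n r).permCongr (permShift σ 1) = permShift σ 1
      rw [master_mid]
      exact congrArg (permShift σ) (map_one (pCH (cE n r)))) u
  have h2 : psi K (mE p n r) (iota2 K p (n+r) z) = iota2 K p (r+n) (psi K (cE n r) z) := by
    simp only [iota2]
    rw [psi_ringHom (mE p n r) (shR p (n+r)) ((shR p (r+n)).comp (pCH (cE n r)))
      (fun y => by
        show (mE p n r).permCongr (permShift 1 y) = permShift 1 ((cE n r).permCongr y)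
        rw [master_mid]) z, mapDomainRingHom_comp]
    rfl
  rw [ztensor_eq, map_mul, h1, h2, ← ztensor_eq]

end ZAux

namespace ZAux

open Equiv MonoidAlgebra Polynomial

variable {K : Type} [Field K]

lemma permShift_apply_E {p q : ℕ} (σ : Equiv.Perm (Fin p)) (τ : Equiv.Perm (Fin q))
    (v : Fin p ⊕ Fin q) :
    permShift σ τ (finSumFinEquiv v) = finSumFinEquiv (Equiv.sumCongr σ τ v) := by
  simp [permShift]

lemma permShift_apply_E' {q n : ℕ} (τ : Equiv.Perm (Fin q)) (σ : Equiv.Perm (Fin (n + 1)))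
    (v : Fin q ⊕ Fin (n + 1)) :
    @DFunLike.coe (Equiv.Perm (Fin (q + n + 1))) _ _ _
        (permShift τ σ : Equiv.Perm (Fin (q + (n + 1))))
        ((finSumFinEquiv : Fin q ⊕ Fin (n + 1) ≃ Fin (q + (n + 1))) v) =
      (finSumFinEquiv : Fin q ⊕ Fin (n + 1) ≃ Fin (q + (n + 1))) (Equiv.sumCongr τ σ v) :=
  permShift_apply_E τ σ v

lemma last_eq (q n : ℕ) :
    (Fin.last (q + n) : Fin (q + (n + 1))) = finSumFinEquiv (Sum.inr (Fin.last n)) := by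
  apply Fin.ext; simp

lemma castSucc_E_inl {q n : ℕ} (i : Fin q) :
    Fin.castSucc (finSumFinEquiv (Sum.inl i) : Fin (q + n)) =
      (finSumFinEquiv : Fin q ⊕ Fin (n + 1) ≃ Fin (q + (n + 1))) (Sum.inl i) := by
  apply Fin.ext; simp

lemma castSucc_E_inr {q n : ℕ} (j : Fin n) :
    (Fin.castSucc (finSumFinEquiv (Sum.inr j) : Fin (q + n)) : Fin (q + (n + 1))) =
      finSumFinEquiv (Sum.inr j.castSucc) := by
  apply Fin.ext; simp

lemma reduceLast_castSucc {m : ℕ} (π : Equiv.Perm (Fin (m + 1))) (k : Fin m) :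
    Fin.castSucc (reduceLast π k) =
      if π k.castSucc = Fin.last m then π (Fin.last m) else π k.castSucc := by
  by_cases h : π k.castSucc = Fin.last m
  · have hne : π (Fin.last m) ≠ Fin.last m := by
      intro hc
      exact absurd (π.injective (h.trans hc.symm)) (Fin.castSucc_lt_last k).ne
    have he : (finSuccEquivLast.permCongr π) (some k) = none := by
      simp [h]
    have h2 := Equiv.removeNone_none _ he
    have h3 : (finSuccEquivLast.permCongr π) none = some ((π (Fin.last m)).castPred hne) := by
      conv_lhs => rw [Equiv.permCongr_apply, finSuccEquivLast_symm_none,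
        ← Fin.castSucc_castPred (π (Fin.last m)) hne]
      rw [finSuccEquivLast_castSucc]
    have h4 : reduceLast π k = (π (Fin.last m)).castPred hne :=
      Option.some_injective _ (h2.trans h3)
    rw [if_pos h, h4, Fin.castSucc_castPred]
  · have he : (finSuccEquivLast.permCongr π) (some k) = some ((π k.castSucc).castPred h) := by
      conv_lhs => rw [Equiv.permCongr_apply, finSuccEquivLast_symm_some,
        ← Fin.castSucc_castPred (π k.castSucc) h]
      rw [finSuccEquivLast_castSucc]
    have h2 := Equiv.removeNone_some _ ⟨_, he⟩
    have h4 : reduceLast π k = (π k.castSucc).castPred h :=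
      Option.some_injective _ (h2.trans he)
    rw [if_neg h, h4, Fin.castSucc_castPred]

lemma reduceLast_permShift {q n : ℕ} (τ : Equiv.Perm (Fin q)) (σ : Equiv.Perm (Fin (n + 1))) :
    reduceLast (n := q + n) (permShift τ σ : Equiv.Perm (Fin (q + (n + 1)))) =
      permShift τ (reduceLast σ) := by
  apply Equiv.ext
  intro k
  obtain ⟨v, rfl⟩ := finSumFinEquiv.surjective k
  apply Fin.castSucc_injective
  rw [reduceLast_castSucc]
  cases v with
  | inl i =>
      rw [castSucc_E_inl]
      simp only [permShift_apply_E', permShift_apply_E]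
      have hs : Equiv.sumCongr τ σ (Sum.inl i) = Sum.inl (τ i) := rfl
      have hs2 : Equiv.sumCongr τ (reduceLast σ) (Sum.inl i) = Sum.inl (τ i) := rfl
      rw [hs, hs2, if_neg (by
        rw [last_eq]
        simp only [Fin.ext_iff, finSumFinEquiv_apply_left, finSumFinEquiv_apply_right,
          Fin.coe_castAdd, Fin.coe_natAdd, Fin.val_last]
        have := (τ i).isLt
        omega), castSucc_E_inl]
  | inr j =>
      rw [castSucc_E_inr]
      simp only [permShift_apply_E', permShift_apply_E]
      have hs : Equiv.sumCongr τ σ (Sum.inr j.castSucc) = Sum.inr (σ j.castSucc) := rfl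
      have hs2 : Equiv.sumCongr τ (reduceLast σ) (Sum.inr j) = Sum.inr (reduceLast σ j) := rfl
      rw [hs, hs2, castSucc_E_inr, reduceLast_castSucc]
      by_cases h : σ j.castSucc = Fin.last n
      · rw [if_pos h,
          if_pos (show @Eq (Fin (q + n + 1))
            ((finSumFinEquiv : Fin q ⊕ Fin (n + 1) ≃ Fin (q + (n + 1))) (Sum.inr (σ j.castSucc)))
            (Fin.last (q + n)) from by rw [last_eq, h]),
          last_eq, permShift_apply_E']
        rfl
      · rw [if_neg h,
          if_neg (show ¬@Eq (Fin (q + n + 1))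
            ((finSumFinEquiv : Fin q ⊕ Fin (n + 1) ≃ Fin (q + (n + 1))) (Sum.inr (σ j.castSucc)))
            (Fin.last (q + n)) from by
              rw [last_eq]
              simp only [Fin.ext_iff, finSumFinEquiv_apply_right, Fin.coe_natAdd, Fin.val_last]
              have hh : ((σ j.castSucc : Fin (n + 1)) : ℕ) ≠ n := fun hv =>
                h (Fin.ext (by simp [hv]))
              omega)]

lemma permShift_last_iff {q n : ℕ} (τ : Equiv.Perm (Fin q)) (σ : Equiv.Perm (Fin (n + 1))) :
    @DFunLike.coe (Equiv.Perm (Fin (q + n + 1))) _ _ _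
        (permShift τ σ : Equiv.Perm (Fin (q + (n + 1)))) (Fin.last (q + n)) = Fin.last (q + n) ↔
      σ (Fin.last n) = Fin.last n := by
  rw [last_eq, permShift_apply_E']
  have hs : Equiv.sumCongr τ σ (Sum.inr (Fin.last n)) = Sum.inr (σ (Fin.last n)) := rfl
  rw [hs]
  exact ⟨fun hE => Sum.inr_injective (finSumFinEquiv.injective hE), fun hE => by rw [hE]⟩

lemma contract_single {n : ℕ} (σ : Equiv.Perm (Fin (n + 1))) (f : Polynomial K) :
    contractZ (MonoidAlgebra.single σ f) = MonoidAlgebra.single (reduceLast σ)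
      ((if σ (Fin.last n) = Fin.last n then (X : Polynomial K) else 1) * f) := by
  rw [contractZ, MonoidAlgebra.coeff_single]
  exact Finsupp.sum_single_index (by simp)

lemma contract_zero {n : ℕ} : contractZ (0 : Zn K (n + 1)) = 0 := by
  rw [contractZ, MonoidAlgebra.coeff_zero]
  exact Finsupp.sum_zero_index

lemma contract_add {n : ℕ} (u v : Zn K (n + 1)) :
    contractZ (u + v) = contractZ u + contractZ v := by
  rw [contractZ, contractZ, contractZ, MonoidAlgebra.coeff_add]
  exact Finsupp.sum_add_index' (by simp) (by intro a b₁ b₂; simp [mul_add])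

lemma ztensor_add_left {p q : ℕ} (a a' : Zn K p) (b : Zn K q) :
    ztensor (a + a') b = ztensor a b + ztensor a' b := by
  rw [ztensor_eq, ztensor_eq, ztensor_eq, map_add, add_mul]

lemma ztensor_add_right {p q : ℕ} (a : Zn K p) (b b' : Zn K q) :
    ztensor a (b + b') = ztensor a b + ztensor a b' := by
  rw [ztensor_eq, ztensor_eq, ztensor_eq, map_add, mul_add]

lemma ztensor_zero_left {p q : ℕ} (b : Zn K q) : ztensor (0 : Zn K p) b = 0 := by
  rw [ztensor_eq, map_zero, zero_mul]

lemma ztensor_zero_right {p q : ℕ} (a : Zn K p) : ztensor a (0 : Zn K q) = 0 := by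
  rw [ztensor_eq, map_zero, mul_zero]

lemma iota1_single {p q : ℕ} (σ : Equiv.Perm (Fin p)) (f : Polynomial K) :
    iota1 K p q (MonoidAlgebra.single σ f) = MonoidAlgebra.single (shL p q σ) f :=
  MonoidAlgebra.mapDomain_single

lemma iota2_single {p q : ℕ} (τ : Equiv.Perm (Fin q)) (f : Polynomial K) :
    iota2 K p q (MonoidAlgebra.single τ f) = MonoidAlgebra.single (shR p q τ) f :=
  MonoidAlgebra.mapDomain_single

lemma ztensor_single_single {p q : ℕ} (σ : Equiv.Perm (Fin p)) (τ : Equiv.Perm (Fin q))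
    (f g : Polynomial K) :
    ztensor (MonoidAlgebra.single σ f) (MonoidAlgebra.single τ g) =
      MonoidAlgebra.single (permShift σ τ) (f * g) := by
  rw [ztensor_eq, iota1_single, iota2_single, MonoidAlgebra.single_mul_single, shL_mul_shR]

lemma shL_zero {q : ℕ} (σ : Equiv.Perm (Fin q)) : shL q 0 σ = σ := by
  have hE : ∀ i : Fin q, (finSumFinEquiv (Sum.inl i) : Fin (q + 0)) = i := fun i =>
    Fin.ext (by rw [finSumFinEquiv_apply_left]; rfl)
  apply Equiv.ext
  intro k
  obtain ⟨v, rfl⟩ := finSumFinEquiv.surjective k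
  cases v with
  | inl i =>
      rw [shL_apply, permShift_apply_E]
      have hs : Equiv.sumCongr σ (1 : Equiv.Perm (Fin 0)) (Sum.inl i) = Sum.inl (σ i) := rfl
      rw [hs, hE, hE]
  | inr j => exact j.elim0

lemma ztensor_one {q : ℕ} (b : Zn K q) : ztensor b (1 : Zn K 0) = b := by
  rw [ztensor_eq, map_one, mul_one]
  show MonoidAlgebra.ofCoeff (Finsupp.mapDomain (shL q 0) b.coeff) = b
  rw [Finsupp.mapDomain_congr (g := id) (fun σ _ => shL_zero σ), Finsupp.mapDomain_id,
    MonoidAlgebra.ofCoeff_coeff]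

lemma contract_ztensor {q n : ℕ} (b : Zn K q) (x : Zn K (n + 1)) :
    contractZ (n := q + n) (ztensor b x : Zn K (q + (n + 1))) = ztensor b (contractZ x) := by
  induction b using MonoidAlgebra.induction_linear with
  | zero => rw [ztensor_zero_left, contract_zero, ztensor_zero_left]
  | add f g hf hg => rw [ztensor_add_left, contract_add, hf, hg, ztensor_add_left]
  | single τ g =>
      induction x using MonoidAlgebra.induction_linear with
      | zero => rw [ztensor_zero_right, contract_zero, contract_zero, ztensor_zero_right]
      | add f' g' hf hg => rw [ztensor_add_right, contract_add, hf, hg, contract_add,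
          ztensor_add_right]
      | single σ f =>
          rw [ztensor_single_single, contract_single, contract_single, ztensor_single_single,
            reduceLast_permShift]
          congr 1
          by_cases h : σ (Fin.last n) = Fin.last n
          · rw [if_pos h, if_pos ((permShift_last_iff τ σ).mpr h)]
            ring
          · rw [if_neg h, if_neg (fun hcn => h ((permShift_last_iff τ σ).mp hcn))]
            ring

end ZAux

namespace ZAux

variable {K : Type} [Field K]

lemma ztensor_neg_right {p q : ℕ} (a : Zn K p) (b : Zn K q) :
    ztensor a (-b) = -ztensor a b := by
  rw [ztensor_eq, ztensor_eq, map_neg]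
  exact mul_neg (iota1 K p q a) (iota2 K p q b)

lemma ztensor_mul_mid {p q : ℕ} (a : Zn K p) (r x : Zn K q) :
    ztensor a (r * x) = iota2 K p q r * ztensor a x := by
  rw [ztensor_eq, map_mul, ← mul_assoc, iota_comm, mul_assoc, ← ztensor_eq]

lemma ztensor_mul_right {p q : ℕ} (a : Zn K p) (x r : Zn K q) :
    ztensor a (x * r) = ztensor a x * iota2 K p q r := by
  rw [ztensor_eq, map_mul, ← mul_assoc, ← ztensor_eq]

/-- the auxiliary ideal `J_n = {x | a ⊗ x ∈ M_{p+n}}`. -/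
noncomputable def Jdl (M : ZIdeal K) (p : ℕ) (a : Zn K p) : ZIdeal K where
  carrier := fun n => {x : Zn K n | ztensor a x ∈ M.carrier (p + n)}
  zero_mem := fun n => by
    show ztensor a (0 : Zn K n) ∈ M.carrier (p + n)
    rw [ztensor_zero_right]
    exact M.zero_mem _
  add_mem := fun n x y hx hy => by
    show ztensor a (x + y) ∈ M.carrier (p + n)
    rw [ztensor_add_right]
    exact M.add_mem _ _ _ hx hy
  neg_mem := fun n x hx => by
    show ztensor a (-x) ∈ M.carrier (p + n)
    rw [ztensor_neg_right]
    exact M.neg_mem _ _ hx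
  mul_mem_left := fun n r x hx => by
    show ztensor a (r * x) ∈ M.carrier (p + n)
    rw [ztensor_mul_mid]
    exact M.mul_mem_left _ _ _ hx
  mul_mem_right := fun n r x hx => by
    show ztensor a (x * r) ∈ M.carrier (p + n)
    rw [ztensor_mul_right]
    exact M.mul_mem_right _ _ _ hx
  tensor_mem_left := fun n r x c hx => by
    show ztensor a (ztensor x c) ∈ M.carrier (p + (n + r))
    have h1 : ztensor (ztensor a x) c ∈ M.carrier ((p + n) + r) :=
      M.tensor_mem_left _ _ _ _ hx
    have h2 := psi_mem M (by omega) (aE p n r) h1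
    rwa [psi_aE] at h2
  tensor_mem_right := fun n r x c hx => by
    show ztensor a (ztensor c x) ∈ M.carrier (p + (r + n))
    have h1 : ztensor (ztensor a x) c ∈ M.carrier ((p + n) + r) :=
      M.tensor_mem_left _ _ _ _ hx
    have h2 := psi_mem M (by omega) (aE p n r) h1
    rw [psi_aE] at h2
    have h3 := psi_mem M (by omega) (mE p n r) h2
    rwa [psi_mE, psi_cE] at h3
  contract_mem := fun n x hx => by
    show ztensor a (contractZ x) ∈ M.carrier (p + n)
    have h1 : contractZ (n := p + n) (ztensor a x : Zn K (p + (n + 1))) ∈ M.carrier (p + n) :=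
      M.contract_mem (p + n) _ hx
    rwa [contract_ztensor] at h1

end ZAux


theorem stmt10 (K : Type) [Field K] [CharZero K] (M : ZIdeal K)
    (hM : M.IsMaximal) : M.IsPrime := by
  refine ⟨hM.1, fun p q a b hab => ?_⟩
  by_cases hb : b ∈ M.carrier q
  · exact Or.inr hb
  left
  have hsub : ∀ n, M.carrier n ⊆ (ZAux.Jdl M p a).carrier n := fun n x hx =>
    M.tensor_mem_right n p x a hx
  rcases hM.2 (ZAux.Jdl M p a) hsub with hJ | hJ
  · have hbJ : b ∈ (ZAux.Jdl M p a).carrier q := hab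
    rw [hJ q] at hbJ
    exact absurd hbJ hb
  · have h1 : (1 : Zn K 0) ∈ (ZAux.Jdl M p a).carrier 0 := by rw [hJ 0]; trivial
    have h2 : ztensor a (1 : Zn K 0) ∈ M.carrier (p + 0) := h1
    rwa [ZAux.ztensor_one] at h2
end

section
/- Let 𝒜 be a sub-wheeled PROP of the mixed tensor algebra 𝒱 (note that then 𝒜^0_0 = K). Then 𝒜 is simple if and only if for all p, q ≥ 0 the trace pairing restricted to 𝒜^p_q × 𝒜^q_p is nondegenerate, i.e., for every nonzero u ∈ 𝒜^p_q there exists v ∈ 𝒜^q_p with ⟨u,v⟩ ≠ 0, and for every nonzero v ∈ 𝒜^q_p there exists u ∈ 𝒜^p_q with ⟨u,v⟩ ≠ 0. -/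
/-- The component `𝒱^p_q = (V*)^⊗p ⊗ V^⊗q` of the mixed tensor algebra on an
`d`-dimensional vector space `V`, realized concretely in coordinates: a tensor is
the array of its coefficients `A^{x_1,…,x_p}_{y_1,…,y_q}`. -/
abbrev MixT (K : Type) (d p q : ℕ) : Type := (Fin p → Fin d) → (Fin q → Fin d) → K

/-- The unit `1 ∈ 𝒱^0_0 = K`. -/
def munit (K : Type) [One K] (d : ℕ) : MixT K d 0 0 := fun _ _ => 1

/-- The identity tensor `id ∈ 𝒱^1_1 ≅ End(V)`. -/
def mid (K : Type) [One K] [Zero K] (d : ℕ) : MixT K d 1 1 :=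
  fun x y => if x 0 = y 0 then 1 else 0

/-- The tensor product `⊗ : 𝒱^{p₁}_{q₁} × 𝒱^{p₂}_{q₂} → 𝒱^{p₁+p₂}_{q₁+q₂}`,
juxtaposing the `V*`-factors and the `V`-factors. -/
def mtens {K : Type} [Mul K] {d p₁ q₁ p₂ q₂ : ℕ}
    (A : MixT K d p₁ q₁) (B : MixT K d p₂ q₂) : MixT K d (p₁ + p₂) (q₁ + q₂) :=
  fun x y =>
    A (fun a => x (Fin.castAdd p₂ a)) (fun b => y (Fin.castAdd q₂ b)) *
    B (fun a => x (Fin.natAdd p₁ a)) (fun b => y (Fin.natAdd q₁ b))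

/-- The contraction `∂^i_j : 𝒱^{p+1}_{q+1} → 𝒱^p_q`, evaluating the `i`-th
`V*`-factor on the `j`-th `V`-factor. -/
def mcontr {K : Type} [AddCommMonoid K] {d p q : ℕ} (i : Fin (p + 1)) (j : Fin (q + 1))
    (A : MixT K d (p + 1) (q + 1)) : MixT K d p q :=
  fun x y => ∑ k : Fin d, A (i.insertNth k x) (j.insertNth k y)

/-- The trace pairing `⟨·,·⟩ : 𝒱^p_q × 𝒱^q_p → K`: the full contraction,
i.e. the trace of the composition `B ∘ A : V^⊗p → V^⊗p`. -/
def mpair {K : Type} [CommRing K] {d p q : ℕ} (A : MixT K d p q) (B : MixT K d q p) : K :=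
  ∑ x : Fin p → Fin d, ∑ y : Fin q → Fin d, A x y * B y x

/-- A sub-wheeled PROP of the mixed tensor algebra `𝒱`: a family of `K`-subspaces
`𝒜^p_q ⊆ 𝒱^p_q` containing `1` and `id`, closed under tensor product and under
all contractions. -/
structure SubProp (K : Type) [Field K] (d : ℕ) where
  mem : ∀ p q : ℕ, Set (MixT K d p q)
  unit_mem : munit K d ∈ mem 0 0
  id_mem : mid K d ∈ mem 1 1
  zero_mem : ∀ p q : ℕ, (0 : MixT K d p q) ∈ mem p q
  add_mem : ∀ (p q : ℕ) (A B : MixT K d p q),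
    A ∈ mem p q → B ∈ mem p q → A + B ∈ mem p q
  smul_mem : ∀ (p q : ℕ) (c : K) (A : MixT K d p q), A ∈ mem p q → c • A ∈ mem p q
  tens_mem : ∀ (p₁ q₁ p₂ q₂ : ℕ) (A : MixT K d p₁ q₁) (B : MixT K d p₂ q₂),
    A ∈ mem p₁ q₁ → B ∈ mem p₂ q₂ → mtens A B ∈ mem (p₁ + p₂) (q₁ + q₂)
  contr_mem : ∀ (p q : ℕ) (i : Fin (p + 1)) (j : Fin (q + 1)) (A : MixT K d (p + 1) (q + 1)),
    A ∈ mem (p + 1) (q + 1) → mcontr i j A ∈ mem p q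

/-- An ideal of a sub-wheeled PROP `𝒜` of `𝒱`: a family of `K`-subspaces
`I^p_q ⊆ 𝒜^p_q` absorbing under tensor product with elements of `𝒜` (on either
side) and closed under all contractions. -/
structure PropIdeal {K : Type} [Field K] {d : ℕ} (𝒜 : SubProp K d) where
  mem : ∀ p q : ℕ, Set (MixT K d p q)
  subset : ∀ p q : ℕ, mem p q ⊆ 𝒜.mem p q
  zero_mem : ∀ p q : ℕ, (0 : MixT K d p q) ∈ mem p q
  add_mem : ∀ (p q : ℕ) (A B : MixT K d p q),
    A ∈ mem p q → B ∈ mem p q → A + B ∈ mem p q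
  smul_mem : ∀ (p q : ℕ) (c : K) (A : MixT K d p q), A ∈ mem p q → c • A ∈ mem p q
  tens_mem_left : ∀ (p₁ q₁ p₂ q₂ : ℕ) (A : MixT K d p₁ q₁) (B : MixT K d p₂ q₂),
    A ∈ 𝒜.mem p₁ q₁ → B ∈ mem p₂ q₂ → mtens A B ∈ mem (p₁ + p₂) (q₁ + q₂)
  tens_mem_right : ∀ (p₁ q₁ p₂ q₂ : ℕ) (A : MixT K d p₁ q₁) (B : MixT K d p₂ q₂),
    A ∈ 𝒜.mem p₁ q₁ → B ∈ mem p₂ q₂ → mtens B A ∈ mem (p₂ + p₁) (q₂ + q₁)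
  contr_mem : ∀ (p q : ℕ) (i : Fin (p + 1)) (j : Fin (q + 1)) (A : MixT K d (p + 1) (q + 1)),
    A ∈ mem (p + 1) (q + 1) → mcontr i j A ∈ mem p q

/-- A sub-wheeled PROP is simple if its only ideals are `0` and itself. -/
def SubProp.IsSimple {K : Type} [Field K] {d : ℕ} (𝒜 : SubProp K d) : Prop :=
  ∀ I : PropIdeal 𝒜,
    (∀ p q : ℕ, I.mem p q = {0}) ∨ (∀ p q : ℕ, I.mem p q = 𝒜.mem p q)

/-!
Every operation of a wheeled PROP has an adjoint for the trace pairing that stays inside `𝒜`: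
`⟨∂u, B⟩ = ⟨u, B ⊗ id⟩` up to a permutation of slots, `⟨A ⊗ u, C⟩ = ⟨u, C'⟩` with `C'` a partial
contraction of `A ⊗ C`, and `u ⊗ A` is a permutation of `A ⊗ u`. Hence the radical
`{u ∈ 𝒜 | ⟨u, 𝒜⟩ = 0}` is an ideal, and it is proper because `⟨1, 1⟩ = 1`; so a simple `𝒜` has a
nondegenerate pairing. Conversely, if `u ≠ 0` lies in an ideal `I` and `⟨u, v⟩ ≠ 0` for some
`v ∈ 𝒜`, then `⟨u, v⟩`, a full contraction of `u ⊗ v`, is a nonzero scalar in `I`, so `I = 𝒜`.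

The slot permutations and multiple contractions used here are available in any family closed
under `· ⊗ id` and contractions: contracting `A ⊗ id` moves one slot of `A` to the end, and these
cycles generate the symmetric group.
-/

open Equiv Fin Function

theorem Fin.cycleIcc_castSucc_succ {n : ℕ} (t : Fin n) :
    cycleIcc t.castSucc t.succ = swap t.castSucc t.succ := by
  ext x
  rcases lt_or_ge x t.castSucc with h | h
  · rw [cycleIcc_of_lt h, swap_apply_of_ne_of_ne h.ne (h.trans castSucc_lt_succ).ne]
  rcases le_or_gt x t.succ with h' | h'
  · rw [cycleIcc_of_le_of_le h h']
    obtain rfl | rfl : x = t.castSucc ∨ x = t.succ := by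
      simp only [Fin.le_def, Fin.ext_iff, val_castSucc, val_succ] at h h' ⊢; omega
    · simp [castSucc_lt_succ.ne]
    · simp
  · rw [cycleIcc_of_gt h', swap_apply_of_ne_of_ne (castSucc_lt_succ.trans h').ne' h'.ne']

theorem Equiv.Perm.mclosure_range_cycleIcc_last_inv (n : ℕ) :
    Submonoid.closure (Set.range fun j : Fin (n + 1) => (cycleIcc j (last n))⁻¹) = ⊤ := by
  suffices h : Subgroup.closure (Set.range fun j : Fin (n + 1) => (cycleIcc j (last n))⁻¹) = ⊤ by
    rw [← Subgroup.closure_toSubmonoid_of_finite, h, Subgroup.top_toSubmonoid]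
  rw [eq_top_iff, ← Subgroup.closure_eq_top_of_mclosure_eq_top (mclosure_swap_castSucc_succ n),
    Subgroup.closure_le]
  rintro _ ⟨t, rfl⟩
  dsimp only
  have htrans :
      swap t.castSucc t.succ * cycleIcc t.succ (last n) = cycleIcc t.castSucc (last n) := by
    rw [← cycleIcc_castSucc_succ]
    exact DFunLike.coe_injective (cycleIcc.trans castSucc_lt_succ.le (le_last _))
  rw [eq_mul_inv_of_mul_eq htrans, ← inv_inv (cycleIcc t.castSucc (last n))]
  exact mul_mem (inv_mem (Subgroup.subset_closure ⟨_, rfl⟩)) (Subgroup.subset_closure ⟨_, rfl⟩)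

theorem Fin.init_insertNth_castSucc {α : Type*} {n : ℕ} (j : Fin (n + 1)) (a : α)
    (z : Fin (n + 1) → α) :
    init (j.castSucc.insertNth a z : Fin (n + 2) → α) =
      (j.insertNth a (init z) : Fin (n + 1) → α) := by
  refine eq_insertNth_iff.mpr ⟨insertNth_apply_same _ _ _, funext fun r => ?_⟩
  simp only [removeNth, init]
  rw [← castSucc_succAbove_castSucc, insertNth_apply_succAbove]

theorem Fin.snoc_comp_cycleIcc_last_symm {α : Type*} {n : ℕ} (j : Fin (n + 1)) (a : α)
    (w : Fin n → α) : snoc w a ∘ (cycleIcc j (last n)).symm = j.insertNth a w := by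
  rw [Equiv.comp_symm_eq]
  funext b
  induction b using Fin.lastCases with
  | last => simp [cycleIcc_of_last (le_last j)]
  | cast r =>
    have h := congrFun (cycleIcc_comp_succAbove j (last n) (le_last j)) r
    simp only [Function.comp_apply, succAbove_last] at h
    simp [h]

namespace MixT

variable {K : Type} {d : ℕ}

def reindex {p q p' q' : ℕ} (e : Fin p' ≃ Fin p) (f : Fin q' ≃ Fin q) (A : MixT K d p' q') :
    MixT K d p q :=
  fun x y => A (x ∘ e) (y ∘ f)

section Semiring

variable [Semiring K]

lemma mtens_mid_apply {p q : ℕ} (A : MixT K d p q) (x : Fin (p + 1) → Fin d)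
    (y : Fin (q + 1) → Fin d) :
    mtens A (mid K d) x y = A (init x) (init y) * if x (last p) = y (last q) then 1 else 0 :=
  rfl

lemma mcontr_last_castSucc_mtens_mid {p n : ℕ} (j : Fin (n + 1)) (A : MixT K d p (n + 1)) :
    mcontr (last p) j.castSucc (mtens A (mid K d)) =
      reindex (.refl _) (cycleIcc j (last n)).symm A := by
  funext x z
  have hlast (k : Fin d) : (j.castSucc.insertNth k z : Fin (n + 2) → Fin d) (last (n + 1)) =
      z (last n) := by
    rw [← succAbove_ne_last_last (castSucc_ne_last j), insertNth_apply_succAbove]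
  simp only [mcontr, mtens_mid_apply, insertNth_last', init_snoc, snoc_last, hlast,
    init_insertNth_castSucc, mul_ite, mul_one, mul_zero, Finset.sum_ite_eq', Finset.mem_univ,
    if_true, reindex, coe_refl, comp_id]
  rw [← Fin.snoc_comp_cycleIcc_last_symm, snoc_init_self]

lemma flip_mid : flip (mid K d) = mid K d := by
  funext x y
  simp only [flip, mid, eq_comm]

structure IsContractionClosed (S : ∀ p q : ℕ, Set (MixT K d p q)) : Prop where
  mtens_mid_mem {p q : ℕ} {A : MixT K d p q} : A ∈ S p q → mtens A (mid K d) ∈ S (p + 1) (q + 1)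
  mcontr_mem {p q : ℕ} (i : Fin (p + 1)) (j : Fin (q + 1)) {A : MixT K d (p + 1) (q + 1)} :
    A ∈ S (p + 1) (q + 1) → mcontr i j A ∈ S p q

namespace IsContractionClosed

variable {S : ∀ p q : ℕ, Set (MixT K d p q)} (hS : IsContractionClosed S)
include hS

theorem flip : IsContractionClosed fun p q => {A : MixT K d p q | flip A ∈ S q p} where
  mtens_mid_mem {p q A} hA := by
    have h := hS.mtens_mid_mem hA
    rwa [← flip_mid] at h
  mcontr_mem i j _ hA := hS.mcontr_mem j i hA

theorem reindex_right_mem {p q : ℕ} (τ : Perm (Fin q)) {A : MixT K d p q} (hA : A ∈ S p q) :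
    reindex (.refl _) τ A ∈ S p q := by
  cases q with
  | zero =>
    convert hA
    funext x y
    exact congrArg (A x) (Subsingleton.elim _ _)
  | succ n =>
    let G : Submonoid (Perm (Fin (n + 1))) :=
      { carrier := {τ | ∀ p (A : MixT K d p (n + 1)), A ∈ S p (n + 1) →
          reindex (.refl _) τ A ∈ S p (n + 1)}
        one_mem' := fun _ _ hA => hA
        mul_mem' := fun hσ hτ p A hA => hσ p _ (hτ p A hA) }
    have hG : Submonoid.closure (Set.range fun j : Fin (n + 1) => (cycleIcc j (last n))⁻¹) ≤ G := by
      rw [Submonoid.closure_le]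
      rintro _ ⟨j, rfl⟩ p A hA
      simp only [Perm.inv_def, ← mcontr_last_castSucc_mtens_mid]
      exact hS.mcontr_mem _ _ (hS.mtens_mid_mem hA)
    rw [Perm.mclosure_range_cycleIcc_last_inv] at hG
    exact hG (Submonoid.mem_top τ) p A hA

theorem reindex_left_mem {p q : ℕ} (σ : Perm (Fin p)) {A : MixT K d p q} (hA : A ∈ S p q) :
    reindex σ (.refl _) A ∈ S p q :=
  hS.flip.reindex_right_mem σ (A := _root_.flip A) hA

theorem reindex_mem {p q p' q' : ℕ} (e : Fin p' ≃ Fin p) (f : Fin q' ≃ Fin q)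
    {A : MixT K d p' q'} (hA : A ∈ S p' q') : reindex e f A ∈ S p q := by
  obtain rfl : p' = p := by simpa using Fintype.card_congr e
  obtain rfl : q' = q := by simpa using Fintype.card_congr f
  exact hS.reindex_left_mem e (hS.reindex_right_mem f hA)

theorem sum_append_mem {p q : ℕ} :
    ∀ (m : ℕ) {W : MixT K d (p + m) (q + m)}, W ∈ S (p + m) (q + m) →
      (fun x y => ∑ t : Fin m → Fin d, W (append x t) (append y t)) ∈ S p q
  | 0, W, hW => by
    simpa [Fintype.sum_unique, append_right_nil] using hW
  | m + 1, W, hW => by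
    convert sum_append_mem m (hS.mcontr_mem (last _) (last _) hW) using 1
    funext x y
    rw [← (snocEquiv fun _ => Fin d).sum_comp, Fintype.sum_prod_type, Finset.sum_comm]
    simp [snocEquiv, mcontr, insertNth_last', append_snoc]

theorem contract_mem {P Q a b : ℕ} {ι : Type} [Fintype ι] [DecidableEq ι]
    (σ : Fin P ≃ Fin a ⊕ ι) (τ : Fin Q ≃ Fin b ⊕ ι) {W : MixT K d P Q} (hW : W ∈ S P Q) :
    (fun x y => ∑ t : ι → Fin d, W (Sum.elim x t ∘ σ) (Sum.elim y t ∘ τ)) ∈ S a b := by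
  let e := Fintype.equivFin ι
  have hW' := hS.reindex_mem (σ.trans ((sumCongr (.refl _) e).trans finSumFinEquiv))
    (τ.trans ((sumCongr (.refl _) e).trans finSumFinEquiv)) hW
  convert hS.sum_append_mem _ hW' using 1
  funext x y
  rw [← (e.arrowCongr (.refl (Fin d))).sum_comp]
  refine Finset.sum_congr rfl fun t _ => ?_
  have key : ∀ {n} (z : Fin n → Fin d), append z ((e.arrowCongr (.refl (Fin d))) t) ∘
      (finSumFinEquiv ∘ (sumCongr (.refl _) e)) = Sum.elim z t := by
    intro n z
    ext (i | j) <;> simp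
  simp only [reindex, coe_trans, ← comp_assoc, key]

end IsContractionClosed

def partialPair {p₁ q₁ p₂ q₂ : ℕ} (A : MixT K d p₁ q₁) (C : MixT K d (q₁ + q₂) (p₁ + p₂)) :
    MixT K d q₂ p₂ :=
  fun y x => ∑ r : Fin p₁ → Fin d, ∑ s : Fin q₁ → Fin d, A r s * C (append s y) (append r x)

theorem IsContractionClosed.partialPair_mem {S : ∀ p q : ℕ, Set (MixT K d p q)}
    (hS : IsContractionClosed S) {p₁ q₁ p₂ q₂ : ℕ} {A : MixT K d p₁ q₁}
    {C : MixT K d (q₁ + q₂) (p₁ + p₂)} (hAC : mtens A C ∈ S (p₁ + (q₁ + q₂)) (q₁ + (p₁ + p₂))) :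
    partialPair A C ∈ S q₂ p₂ := by
  -- the lower slots of `A ⊗ C` carry `(r, s, y)` and the upper ones `(s, r, x)`
  have h := hS.contract_mem
    ((finSumFinEquiv.symm.trans (sumCongr (.refl _) finSumFinEquiv.symm)).trans
      ((sumAssoc _ _ _).symm.trans (sumComm _ _)))
    ((finSumFinEquiv.symm.trans (sumCongr (.refl _) finSumFinEquiv.symm)).trans
      ((sumAssoc _ _ _).symm.trans ((sumComm _ _).trans (sumCongr (.refl _) (sumComm _ _))))) hAC
  convert h using 1
  funext y x
  rw [← (sumArrowEquivProdArrow _ _ _).symm.sum_comp, Fintype.sum_prod_type]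
  refine Finset.sum_congr rfl fun r _ => Finset.sum_congr rfl fun s _ => ?_
  simp only [mtens]
  congr 1
  · congr 1 <;> funext b <;> simp
  · congr 1 <;> funext b <;> refine Fin.addCases (fun _ => ?_) (fun _ => ?_) b <;> simp

lemma mcontr_eq_mcontr_last_reindex {p q : ℕ} (i : Fin (p + 1)) (j : Fin (q + 1))
    (u : MixT K d (p + 1) (q + 1)) :
    mcontr i j u = mcontr (last p) (last q)
      (reindex (cycleIcc i (last p)).symm (cycleIcc j (last q)).symm u) := by
  funext x y
  simp only [mcontr, reindex, insertNth_last', Fin.snoc_comp_cycleIcc_last_symm]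

end Semiring

section CommRing

variable [CommRing K]

lemma mpair_comm {p q : ℕ} (A : MixT K d p q) (B : MixT K d q p) : mpair A B = mpair B A := by
  rw [mpair, mpair, Finset.sum_comm]
  simp only [mul_comm]

lemma mpair_zero_left {p q : ℕ} (B : MixT K d q p) : mpair (0 : MixT K d p q) B = 0 := by
  simp [mpair]

lemma mpair_add_left {p q : ℕ} (A A' : MixT K d p q) (B : MixT K d q p) :
    mpair (A + A') B = mpair A B + mpair A' B := by
  simp [mpair, add_mul, Finset.sum_add_distrib]

lemma mpair_smul_left {p q : ℕ} (c : K) (A : MixT K d p q) (B : MixT K d q p) :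
    mpair (c • A) B = c * mpair A B := by
  simp [mpair, Finset.mul_sum, mul_assoc]

lemma mpair_munit : mpair (munit K d) (munit K d) = 1 := by
  simp [mpair, munit]

lemma mpair_reindex {p q p' q' : ℕ} (e : Fin p' ≃ Fin p) (f : Fin q' ≃ Fin q)
    (u : MixT K d p' q') (C : MixT K d q p) :
    mpair (reindex e f u) C = mpair u (reindex f.symm e.symm C) := by
  rw [mpair, ← (e.arrowCongr (.refl (Fin d))).sum_comp]
  simp_rw [← (f.arrowCongr (.refl (Fin d))).sum_comp]
  simp only [mpair, reindex, comp_def, arrowCongr_apply, coe_refl, comp_apply, symm_apply_apply,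
    id_eq]
  rfl

lemma mpair_mcontr_last {p q : ℕ} (u : MixT K d (p + 1) (q + 1)) (B : MixT K d q p) :
    mpair (mcontr (last p) (last q) u) B = mpair u (mtens B (mid K d)) := by
  simp only [mpair, mcontr, mtens_mid_apply, insertNth_last', Finset.sum_mul]
  simp_rw [← (snocEquiv fun _ => Fin d).sum_comp]
  simp only [snocEquiv, coe_fn_mk, init_snoc, snoc_last, mul_ite, mul_one, mul_zero,
    Fintype.sum_prod_type, Finset.sum_ite_irrel, Finset.sum_const_zero, Finset.sum_ite_eq',
    Finset.mem_univ, if_true]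
  conv_rhs => rw [Finset.sum_comm]
  refine Finset.sum_congr rfl fun x _ => ?_
  rw [Finset.sum_comm]

lemma mtens_append {p₁ q₁ p₂ q₂ : ℕ} (A : MixT K d p₁ q₁) (B : MixT K d p₂ q₂)
    (r : Fin p₁ → Fin d) (x : Fin p₂ → Fin d) (s : Fin q₁ → Fin d) (y : Fin q₂ → Fin d) :
    mtens A B (append r x) (append s y) = A r s * B x y := by
  simp [mtens]

lemma mpair_mtens_left {p₁ q₁ p₂ q₂ : ℕ} (A : MixT K d p₁ q₁) (u : MixT K d p₂ q₂)
    (C : MixT K d (q₁ + q₂) (p₁ + p₂)) : mpair (mtens A u) C = mpair u (partialPair A C) := by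
  simp only [mpair, partialPair, Finset.mul_sum]
  rw [← (appendEquiv _ _).sum_comp, Fintype.sum_prod_type]
  simp_rw [← (appendEquiv _ _).sum_comp, Fintype.sum_prod_type]
  simp only [appendEquiv, coe_fn_mk, mtens_append]
  rw [Finset.sum_comm]
  refine Finset.sum_congr rfl fun x _ => ?_
  conv_rhs => rw [Finset.sum_comm]
  refine Finset.sum_congr rfl fun r _ => ?_
  rw [Finset.sum_comm]
  exact Finset.sum_congr rfl fun _ _ => Finset.sum_congr rfl fun _ _ => by ring

lemma mtens_comm {p₁ q₁ p₂ q₂ : ℕ} (A : MixT K d p₁ q₁) (B : MixT K d p₂ q₂) :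
    mtens B A = reindex finAddFlip finAddFlip (mtens A B) := by
  funext x y
  simp [mtens, reindex, mul_comm]

lemma mtens_munit {p q : ℕ} (A : MixT K d p q) : mtens A (munit K d) = A := by
  funext x y
  exact mul_one _

lemma partialPair_eq_mpair {p q : ℕ} (A : MixT K d p q) (C : MixT K d q p) :
    partialPair (p₂ := 0) (q₂ := 0) A C = fun _ _ => mpair A C := by
  funext y x
  simp [partialPair, mpair, append_right_nil]

end CommRing

end MixT

open MixT

section Field

variable {K : Type} [Field K] {d : ℕ}

theorem SubProp.isContractionClosed (𝒜 : SubProp K d) : IsContractionClosed 𝒜.mem where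
  mtens_mid_mem hA := 𝒜.tens_mem _ _ _ _ _ _ hA 𝒜.id_mem
  mcontr_mem i j _ hA := 𝒜.contr_mem _ _ i j _ hA

theorem PropIdeal.isContractionClosed {𝒜 : SubProp K d} (I : PropIdeal 𝒜) :
    IsContractionClosed I.mem where
  mtens_mid_mem hA := I.tens_mem_right _ _ _ _ _ _ 𝒜.id_mem hA
  mcontr_mem i j _ hA := I.contr_mem _ _ i j _ hA

def SubProp.radical (𝒜 : SubProp K d) : PropIdeal 𝒜 where
  mem p q := {u | u ∈ 𝒜.mem p q ∧ ∀ v ∈ 𝒜.mem q p, mpair u v = 0}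
  subset _ _ _ hu := hu.1
  zero_mem p q := ⟨𝒜.zero_mem p q, fun v _ => mpair_zero_left v⟩
  add_mem _ _ _ _ hA hB := ⟨𝒜.add_mem _ _ _ _ hA.1 hB.1, fun v hv => by
    rw [mpair_add_left, hA.2 v hv, hB.2 v hv, add_zero]⟩
  smul_mem _ _ c _ hA := ⟨𝒜.smul_mem _ _ c _ hA.1, fun v hv => by
    rw [mpair_smul_left, hA.2 v hv, mul_zero]⟩
  tens_mem_left _ _ _ _ _ _ hA hu := ⟨𝒜.tens_mem _ _ _ _ _ _ hA hu.1, fun C hC => by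
    rw [mpair_mtens_left]
    exact hu.2 _ (𝒜.isContractionClosed.partialPair_mem (𝒜.tens_mem _ _ _ _ _ _ hA hC))⟩
  tens_mem_right _ _ _ _ _ _ hA hu := ⟨𝒜.tens_mem _ _ _ _ _ _ hu.1 hA, fun C hC => by
    rw [mtens_comm, mpair_reindex, mpair_mtens_left]
    exact hu.2 _ (𝒜.isContractionClosed.partialPair_mem
      (𝒜.tens_mem _ _ _ _ _ _ hA (𝒜.isContractionClosed.reindex_mem _ _ hC)))⟩
  contr_mem _ _ _ _ _ hu := ⟨𝒜.contr_mem _ _ _ _ _ hu.1, fun B hB => by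
    rw [mcontr_eq_mcontr_last_reindex, mpair_mcontr_last, mpair_reindex]
    exact hu.2 _ (𝒜.isContractionClosed.reindex_mem _ _ (𝒜.isContractionClosed.mtens_mid_mem hB))⟩

theorem SubProp.IsSimple.radical_mem_eq_zero {𝒜 : SubProp K d} (h : 𝒜.IsSimple) (p q : ℕ) :
    𝒜.radical.mem p q = {0} := by
  refine (h 𝒜.radical).resolve_right (fun hall => ?_) p q
  have hunit : munit K d ∈ 𝒜.radical.mem 0 0 := by
    rw [hall]
    exact 𝒜.unit_mem
  have h1 := hunit.2 _ 𝒜.unit_mem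
  rw [mpair_munit] at h1
  exact one_ne_zero h1

theorem PropIdeal.mem_eq_of_mpair_ne_zero {𝒜 : SubProp K d} (I : PropIdeal 𝒜) {p q : ℕ}
    {u : MixT K d p q} (hu : u ∈ I.mem p q) {v : MixT K d q p} (hv : v ∈ 𝒜.mem q p)
    (huv : mpair u v ≠ 0) (p' q' : ℕ) : I.mem p' q' = 𝒜.mem p' q' := by
  have hpair : (fun _ _ => mpair u v : MixT K d 0 0) ∈ I.mem 0 0 := by
    rw [← partialPair_eq_mpair]
    exact I.isContractionClosed.partialPair_mem (I.tens_mem_right _ _ _ _ v u hv hu)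
  have hunit : munit K d ∈ I.mem 0 0 := by
    convert I.smul_mem 0 0 (mpair u v)⁻¹ _ hpair
    funext x y
    simp [munit, huv]
  refine (I.subset p' q').antisymm fun A hA => ?_
  have h := I.tens_mem_left _ _ _ _ A _ hA hunit
  rw [mtens_munit] at h
  exact h

end Field

theorem stmt13_general (K : Type) [Field K] (d : ℕ) (𝒜 : SubProp K d) :
    𝒜.IsSimple ↔
      ∀ p q : ℕ,
        (∀ u ∈ 𝒜.mem p q, u ≠ 0 → ∃ v ∈ 𝒜.mem q p, mpair u v ≠ 0) ∧
        (∀ v ∈ 𝒜.mem q p, v ≠ 0 → ∃ u ∈ 𝒜.mem p q, mpair u v ≠ 0) := by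
  constructor
  · intro h
    have hnd : ∀ p q, ∀ u ∈ 𝒜.mem p q, u ≠ 0 → ∃ v ∈ 𝒜.mem q p, mpair u v ≠ 0 := by
      intro p q u hu hne
      by_contra! hall
      have hrad : u ∈ 𝒜.radical.mem p q := ⟨hu, hall⟩
      exact hne (by simpa [h.radical_mem_eq_zero] using hrad)
    exact fun p q => ⟨hnd p q, fun v hv hne => by simpa only [mpair_comm] using hnd q p v hv hne⟩
  · intro hnd I
    refine or_iff_not_imp_left.mpr fun hI => ?_
    simp only [not_forall] at hI
    obtain ⟨p, q, hpq⟩ := hI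
    obtain ⟨u, hu, hne⟩ : ∃ u ∈ I.mem p q, u ≠ 0 := by
      by_contra! h
      exact hpq (Set.eq_singleton_iff_unique_mem.mpr ⟨I.zero_mem p q, h⟩)
    obtain ⟨v, hv, huv⟩ := (hnd p q).1 u (I.subset p q hu) hne
    exact I.mem_eq_of_mpair_ne_zero hu hv huv

theorem stmt13 (K : Type) [Field K] [CharZero K] (d : ℕ) (𝒜 : SubProp K d) :
    𝒜.IsSimple ↔
      ∀ p q : ℕ,
        (∀ u ∈ 𝒜.mem p q, u ≠ 0 → ∃ v ∈ 𝒜.mem q p, mpair u v ≠ 0) ∧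
        (∀ v ∈ 𝒜.mem q p, v ≠ 0 → ∃ u ∈ 𝒜.mem p q, mpair u v ≠ 0) :=
  stmt13_general K d 𝒜
end
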